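/- If κ ≥ 2 and there exists a complete set of κ − 1 mutually projective Latin squares of order κ (κ − 1 pairwise distinct Latin squares of order κ, all with diagonal entries equal to the symbol 1, which are pairwise projective), then there exists a finite projective plane of order κ. -/

import Mathlib

/-- A finite geometry (finite linear space): any two distinct points lie on exactly one
common line, and every line contains at least two points. -/
def IsGeometry {P : Type*} (lines : Finset (Finset P)) : Prop :=
  (∀ p q : P, p ≠ q → ∃! ℓ, ℓ ∈ lines ∧ p ∈ ℓ ∧ q ∈ ℓ) ∧
  (∀ ℓ ∈ lines, 2 ≤ ℓ.card)

/-- No three of the four points `a, b, c, d` lie on a common line. -/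
def NoThreeCollinear {P : Type*} (lines : Finset (Finset P)) (a b c d : P) : Prop :=
  ∀ ℓ ∈ lines,
    ¬(a ∈ ℓ ∧ b ∈ ℓ ∧ c ∈ ℓ) ∧ ¬(a ∈ ℓ ∧ b ∈ ℓ ∧ d ∈ ℓ) ∧
    ¬(a ∈ ℓ ∧ c ∈ ℓ ∧ d ∈ ℓ) ∧ ¬(b ∈ ℓ ∧ c ∈ ℓ ∧ d ∈ ℓ)

/-- A finite projective plane of order κ. -/
def IsProjectivePlane {P : Type*} (lines : Finset (Finset P)) (κ : ℕ) : Prop :=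
  IsGeometry lines ∧
  (∀ ℓ₁ ∈ lines, ∀ ℓ₂ ∈ lines, ℓ₁ ≠ ℓ₂ → ∃ p, p ∈ ℓ₁ ∧ p ∈ ℓ₂) ∧
  (∃ a b c d : P, a ≠ b ∧ a ≠ c ∧ a ≠ d ∧ b ≠ c ∧ b ≠ d ∧ c ≠ d ∧
    NoThreeCollinear lines a b c d) ∧
  (∀ ℓ ∈ lines, ℓ.card = κ + 1)

/-- A Latin square of order κ: each symbol occurs exactly once in every row and
exactly once in every column. -/
def IsLatinSquare {κ : ℕ} (L : Fin κ → Fin κ → Fin κ) : Prop :=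
  (∀ i : Fin κ, Function.Bijective fun c => L i c) ∧
  (∀ c : Fin κ, Function.Bijective fun i => L i c)

/-- Two Latin squares are projective if for every row index `i` of the first and
every row index `j` of the second there is exactly one column where they agree. -/
def ProjectivePair {κ : ℕ} (L₁ L₂ : Fin κ → Fin κ → Fin κ) : Prop :=
  ∀ i j : Fin κ, ∃! c : Fin κ, L₁ i c = L₂ j c

/-!
Adjoin to the κ − 1 squares the square `(i, c) ↦ i`. Each of the resulting κ squares has
bijective columns, and any two of them are projective. Read row `i` of square `t` as the graph
`c ↦ L t i c` in the grid of cells (column, symbol). Two such graphs share at most one cell, so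
the κ² graphs are determined by their values at any two columns; as there are κ² such pairs of
values, any two cells in different columns lie on exactly one graph. With the κ columns as
vertical lines this is an affine plane of order κ whose parallel classes are the columns and
the κ squares; one point at infinity per class and the line at infinity complete it.
-/

theorem ProjectivePair.symm {κ : ℕ} {L₁ L₂ : Fin κ → Fin κ → Fin κ}
    (h : ProjectivePair L₁ L₂) : ProjectivePair L₂ L₁ :=
  fun i j => by simpa only [eq_comm] using h j i

theorem projectivePair_rowIndex {κ : ℕ} {L : Fin κ → Fin κ → Fin κ}
    (hrow : ∀ j, Function.Bijective (L j)) : ProjectivePair (fun i _ => i) L :=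
  fun i j => by simpa only [eq_comm] using (hrow j).existsUnique i

namespace LatinSquarePlane

section WithRowIndexSquare

variable {κ : ℕ} {S : Type*} (Ls : S → Fin κ → Fin κ → Fin κ)

def withRowIndexSquare : Option S → Fin κ → Fin κ → Fin κ
  | none => fun i _ => i
  | some s => Ls s

variable {Ls}

theorem withRowIndexSquare_column_bijective (hlatin : ∀ s, IsLatinSquare (Ls s))
    (t : Option S) (c : Fin κ) : Function.Bijective fun i => withRowIndexSquare Ls t i c := by
  cases t with
  | none => exact Function.bijective_id
  | some s => exact (hlatin s).2 c

theorem withRowIndexSquare_projectivePair (hlatin : ∀ s, IsLatinSquare (Ls s))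
    (hproj : ∀ s t, s ≠ t → ProjectivePair (Ls s) (Ls t)) :
    ∀ t t', t ≠ t' → ProjectivePair (withRowIndexSquare Ls t) (withRowIndexSquare Ls t')
  | none, none, h => absurd rfl h
  | none, some s, _ => projectivePair_rowIndex (hlatin s).1
  | some s, none, _ => (projectivePair_rowIndex (hlatin s).1).symm
  | some s, some s', h => hproj s s' fun e => h (congrArg some e)

end WithRowIndexSquare

variable {κ : ℕ} {T : Type*} {F : T → Fin κ → Fin κ → Fin κ}
  (hcol : ∀ t c, Function.Bijective fun i => F t i c)
  (hproj : ∀ t t', t ≠ t' → ProjectivePair (F t) (F t'))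

include hcol hproj in
theorem eq_of_graphs_agree_twice {t t' : T} {i j c c' : Fin κ} (hne : (t, i) ≠ (t', j))
    (h : F t i c = F t' j c) (h' : F t i c' = F t' j c') : c = c' := by
  by_cases htt : t = t'
  · subst htt
    exact absurd (by rw [(hcol t c).injective h]) hne
  · exact (hproj t t' htt i j).unique h h'

include hcol hproj in
theorem existsUnique_graph_through [Fintype T] (hcard : Fintype.card T = κ) {c c' : Fin κ}
    (hcc : c ≠ c') (y y' : Fin κ) : ∃! a : T × Fin κ, F a.1 a.2 c = y ∧ F a.1 a.2 c' = y' := by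
  have hinj : Function.Injective fun a : T × Fin κ => (F a.1 a.2 c, F a.1 a.2 c') := by
    rintro ⟨t, i⟩ ⟨t', j⟩ h
    by_contra hne
    simp only [Prod.mk.injEq] at h
    exact hcc (eq_of_graphs_agree_twice hcol hproj hne h.1 h.2)
  have hbij := (Fintype.bijective_iff_injective_and_card _).2 ⟨hinj, by simp [hcard]⟩
  simpa only [Prod.mk.injEq] using hbij.existsUnique (y, y')

/-- `inl (c, y)` is the cell in column `c` holding symbol `y`; `inr none` is the point at
infinity of the vertical lines and `inr (some t)` that of the rows of square `t`. -/
abbrev Point (κ : ℕ) (T : Type*) := (Fin κ × Fin κ) ⊕ Option T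

variable [DecidableEq T]

open Finset Sum

def verticalLine (c : Fin κ) : Finset (Point κ T) :=
  univ.image (fun y => inl (c, y)) ∪ {inr none}

def graphLine (F : T → Fin κ → Fin κ → Fin κ) (t : T) (i : Fin κ) : Finset (Point κ T) :=
  univ.image (fun c => inl (c, F t i c)) ∪ {inr (some t)}

@[simp] theorem inl_mem_verticalLine {c c' y : Fin κ} :
    (inl (c, y) : Point κ T) ∈ verticalLine c' ↔ c = c' := by
  simp [verticalLine, eq_comm]

@[simp] theorem inr_mem_verticalLine {c : Fin κ} {u : Option T} :
    (inr u : Point κ T) ∈ verticalLine c ↔ u = none := by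
  simp [verticalLine]

@[simp] theorem inl_mem_graphLine {t : T} {i c y : Fin κ} :
    (inl (c, y) : Point κ T) ∈ graphLine F t i ↔ F t i c = y := by
  simp [graphLine]

@[simp] theorem inr_mem_graphLine {t : T} {i : Fin κ} {u : Option T} :
    (inr u : Point κ T) ∈ graphLine F t i ↔ u = some t := by
  simp [graphLine]

variable [Fintype T]

def lineAtInfinity : Finset (Point κ T) := univ.image inr

def lines (F : T → Fin κ → Fin κ → Fin κ) : Finset (Finset (Point κ T)) :=
  univ.image verticalLine ∪ univ.image (Function.uncurry (graphLine F)) ∪ {lineAtInfinity}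

@[simp] theorem inr_mem_lineAtInfinity {u : Option T} :
    (inr u : Point κ T) ∈ lineAtInfinity := by
  simp [lineAtInfinity]

@[simp] theorem inl_not_mem_lineAtInfinity {x : Fin κ × Fin κ} :
    (inl x : Point κ T) ∉ lineAtInfinity := by
  simp [lineAtInfinity]

theorem mem_lines {ℓ : Finset (Point κ T)} :
    ℓ ∈ lines F ↔
      (∃ c, ℓ = verticalLine c) ∨ (∃ t i, ℓ = graphLine F t i) ∨ ℓ = lineAtInfinity := by
  simp [lines, eq_comm]
  exact or_rotate

theorem verticalLine_mem_lines (c : Fin κ) : verticalLine c ∈ lines F :=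
  mem_lines.2 (Or.inl ⟨c, rfl⟩)

theorem graphLine_mem_lines (t : T) (i : Fin κ) : graphLine F t i ∈ lines F :=
  mem_lines.2 (Or.inr (Or.inl ⟨t, i, rfl⟩))

theorem lineAtInfinity_mem_lines : lineAtInfinity ∈ lines F :=
  mem_lines.2 (Or.inr (Or.inr rfl))

theorem eq_verticalLine_of_mem {ℓ : Finset (Point κ T)} (hℓ : ℓ ∈ lines F) {c y y' : Fin κ}
    (hy : y ≠ y') (h : inl (c, y) ∈ ℓ) (h' : inl (c, y') ∈ ℓ) : ℓ = verticalLine c := by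
  rcases mem_lines.1 hℓ with ⟨c₀, rfl⟩ | ⟨t, i, rfl⟩ | rfl
  · rw [inl_mem_verticalLine.1 h]
  · simp only [inl_mem_graphLine] at h h'
    exact absurd (h.symm.trans h') hy
  · exact absurd h inl_not_mem_lineAtInfinity

theorem card_of_mem_lines (hcard : Fintype.card T = κ) {ℓ : Finset (Point κ T)}
    (hℓ : ℓ ∈ lines F) : ℓ.card = κ + 1 := by
  rcases mem_lines.1 hℓ with ⟨c, rfl⟩ | ⟨t, i, rfl⟩ | rfl
  · rw [verticalLine, card_union_of_disjoint (by simp),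
      card_image_of_injective _ (fun y y' h => by simpa using h)]
    simp
  · rw [graphLine, card_union_of_disjoint (by simp),
      card_image_of_injective _ (fun c c' h => (Prod.mk.inj (inl_injective h)).1)]
    simp
  · rw [lineAtInfinity, card_image_of_injective _ inr_injective]
    simp [hcard]

theorem noThreeCollinear_corners {x₀ x₁ : Fin κ} (hx : x₀ ≠ x₁) :
    NoThreeCollinear (lines F) (inl (x₀, x₀)) (inl (x₀, x₁)) (inl (x₁, x₀)) (inl (x₁, x₁)) := by
  intro ℓ hℓ
  have column_eq {c c' y y' y'' : Fin κ} (hy : y ≠ y') (h : inl (c, y) ∈ ℓ)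
      (h' : inl (c, y') ∈ ℓ) (h'' : inl (c', y'') ∈ ℓ) : c' = c := by
    rwa [eq_verticalLine_of_mem hℓ hy h h', inl_mem_verticalLine] at h''
  exact ⟨fun ⟨ha, hb, hc⟩ => hx (column_eq hx ha hb hc).symm,
    fun ⟨ha, hb, hd⟩ => hx (column_eq hx ha hb hd).symm,
    fun ⟨ha, hc, hd⟩ => hx (column_eq hx hc hd ha),
    fun ⟨hb, hc, hd⟩ => hx (column_eq hx hc hd hb)⟩

theorem exists_four_noThreeCollinear (hκ : 2 ≤ κ) :
    ∃ a b c d : Point κ T, a ≠ b ∧ a ≠ c ∧ a ≠ d ∧ b ≠ c ∧ b ≠ d ∧ c ≠ d ∧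
      NoThreeCollinear (lines F) a b c d := by
  have hx : (⟨0, by omega⟩ : Fin κ) ≠ ⟨1, by omega⟩ := by simp [Fin.ext_iff]
  exact ⟨_, _, _, _, by simp [hx], by simp [hx], by simp [hx], by simp [hx, hx.symm],
    by simp [hx], by simp [hx], noThreeCollinear_corners hx⟩

include hcol in
theorem existsUnique_line_inl_inr (c y : Fin κ) (u : Option T) :
    ∃! ℓ, ℓ ∈ lines F ∧ inl (c, y) ∈ ℓ ∧ inr u ∈ ℓ := by
  cases u with
  | none =>
    refine ⟨verticalLine c, ⟨verticalLine_mem_lines c, by simp, by simp⟩, ?_⟩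
    rintro ℓ ⟨hℓ, h, h'⟩
    rcases mem_lines.1 hℓ with ⟨c₀, rfl⟩ | ⟨t, i, rfl⟩ | rfl <;> simp_all
  | some t =>
    obtain ⟨i, hi⟩ := (hcol t c).surjective y
    refine ⟨graphLine F t i, ⟨graphLine_mem_lines t i, by simpa using hi, by simp⟩, ?_⟩
    rintro ℓ ⟨hℓ, h, h'⟩
    rcases mem_lines.1 hℓ with ⟨c₀, rfl⟩ | ⟨t', j, rfl⟩ | rfl
    · simp at h'
    · obtain rfl : t' = t := by simpa [eq_comm] using h'
      rw [(hcol t' c).injective ((inl_mem_graphLine.1 h).trans hi.symm)]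
    · simp at h

include hcol hproj in
theorem existsUnique_line_inl_inl (hcard : Fintype.card T = κ) {c c' y y' : Fin κ}
    (hne : (c, y) ≠ (c', y')) : ∃! ℓ, ℓ ∈ lines F ∧ inl (c, y) ∈ ℓ ∧ inl (c', y') ∈ ℓ := by
  by_cases hcc : c = c'
  · subst hcc
    have hy : y ≠ y' := fun h => hne (by rw [h])
    exact ⟨verticalLine c, ⟨verticalLine_mem_lines c, by simp, by simp⟩,
      fun ℓ ⟨hℓ, h, h'⟩ => eq_verticalLine_of_mem hℓ hy h h'⟩
  obtain ⟨⟨t, i⟩, ⟨h₁, h₂⟩, huniq⟩ := existsUnique_graph_through hcol hproj hcard hcc y y'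
  refine ⟨graphLine F t i, ⟨graphLine_mem_lines t i, by simpa, by simpa⟩, ?_⟩
  rintro ℓ ⟨hℓ, h, h'⟩
  rcases mem_lines.1 hℓ with ⟨c₀, rfl⟩ | ⟨t', j, rfl⟩ | rfl
  · simp only [inl_mem_verticalLine] at h h'
    exact absurd (h.trans h'.symm) hcc
  · simp only [inl_mem_graphLine] at h h'
    cases huniq (t', j) ⟨h, h'⟩
    rfl
  · simp at h

theorem existsUnique_line_inr_inr {u u' : Option T} (hne : u ≠ u') :
    ∃! ℓ, ℓ ∈ lines F ∧ inr u ∈ ℓ ∧ inr u' ∈ ℓ := by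
  refine ⟨lineAtInfinity, ⟨lineAtInfinity_mem_lines, by simp, by simp⟩, ?_⟩
  rintro ℓ ⟨hℓ, h, h'⟩
  rcases mem_lines.1 hℓ with ⟨c₀, rfl⟩ | ⟨t, i, rfl⟩ | rfl
  · simp only [inr_mem_verticalLine] at h h'
    exact absurd (h.trans h'.symm) hne
  · simp only [inr_mem_graphLine] at h h'
    exact absurd (h.trans h'.symm) hne
  · rfl

include hcol hproj in
theorem existsUnique_line (hcard : Fintype.card T = κ) {p q : Point κ T} (hpq : p ≠ q) :
    ∃! ℓ, ℓ ∈ lines F ∧ p ∈ ℓ ∧ q ∈ ℓ := by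
  rcases p with ⟨c, y⟩ | u <;> rcases q with ⟨c', y'⟩ | u'
  · exact existsUnique_line_inl_inl hcol hproj hcard fun h => hpq (by rw [h])
  · exact existsUnique_line_inl_inr hcol c y u'
  · simpa only [and_comm, and_left_comm] using existsUnique_line_inl_inr hcol c' y' u
  · exact existsUnique_line_inr_inr fun h => hpq (by rw [h])

include hproj in
theorem exists_mem_inter {ℓ₁ ℓ₂ : Finset (Point κ T)} (h₁ : ℓ₁ ∈ lines F) (h₂ : ℓ₂ ∈ lines F) :
    ∃ p, p ∈ ℓ₁ ∧ p ∈ ℓ₂ := by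
  rcases mem_lines.1 h₁ with ⟨c, rfl⟩ | ⟨t, i, rfl⟩ | rfl <;>
    rcases mem_lines.1 h₂ with ⟨c', rfl⟩ | ⟨t', j, rfl⟩ | rfl
  · exact ⟨inr none, by simp, by simp⟩
  · exact ⟨inl (c, F t' j c), by simp, by simp⟩
  · exact ⟨inr none, by simp, by simp⟩
  · exact ⟨inl (c', F t i c'), by simp, by simp⟩
  · by_cases htt : t = t'
    · exact ⟨inr (some t), by simp, by simp [htt]⟩
    · obtain ⟨c, hc, -⟩ := hproj t t' htt i j
      exact ⟨inl (c, F t i c), by simp, by simp [hc]⟩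
  · exact ⟨inr (some t), by simp, by simp⟩
  · exact ⟨inr none, by simp, by simp⟩
  · exact ⟨inr (some t'), by simp, by simp⟩
  · exact ⟨inr none, by simp, by simp⟩

include hcol hproj in
theorem isProjectivePlane (hκ : 2 ≤ κ) (hcard : Fintype.card T = κ) :
    IsProjectivePlane (lines F) κ :=
  ⟨⟨fun _ _ => existsUnique_line hcol hproj hcard,
      fun _ hℓ => by rw [card_of_mem_lines hcard hℓ]; omega⟩,
    fun _ h₁ _ h₂ _ => exists_mem_inter hproj h₁ h₂,
    exists_four_noThreeCollinear hκ,
    fun _ => card_of_mem_lines hcard⟩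

end LatinSquarePlane

theorem mpls_gives_plane {κ : ℕ} (hκ : 2 ≤ κ)
    (Ls : Fin (κ - 1) → (Fin κ → Fin κ → Fin κ))
    (hlatin : ∀ s, IsLatinSquare (Ls s))
    (hproj : ∀ s t, s ≠ t → ProjectivePair (Ls s) (Ls t)) :
    ∃ (P : Type) (_ : Fintype P) (lines : Finset (Finset P)),
      IsProjectivePlane lines κ := by
  open LatinSquarePlane in
  have hcard : Fintype.card (Option (Fin (κ - 1))) = κ := by simp; omega
  exact ⟨Point κ (Option (Fin (κ - 1))), inferInstance, lines (withRowIndexSquare Ls),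
    isProjectivePlane (withRowIndexSquare_column_bijective hlatin)
      (withRowIndexSquare_projectivePair hlatin hproj) hκ hcard⟩
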